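/- Suppose γ_m ≤ C γ^m for constants C < ∞ and 0 < γ < 1, and γ_0 < 1. Then P(S_n = 0) decays exponentially: there exist constants K and ζ < 1 such that P(S_n = 0) ≤ K ζ^n. -/

import Mathlib

/-!
Write `u n = P(S_n = 0)` and `f k = P(τ = k)` for the first return time `τ` to `0`. Decomposing
at the first return gives the renewal equation `u (n+1) = ∑_{i ≤ n} f (i+1) u (n-i)`.
Since `∑ γ_m < ∞`, the chain never returns with probability `∏ (1 - γ_m) ≥ δ > 0`, so
`∑ f k ≤ 1 - δ < 1`. As `f k ≤ γ_{k-1}` decays geometrically, the generating function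
`F t = ∑ f k t^k` is continuous a little beyond `t = 1`, hence `F t ≤ 1` for some `t > 1`,
and strong induction on the renewal equation gives `u n ≤ t⁻ⁿ`.
-/

open Finset

/-- `hoc γ n j` is the probability `P(S_n = j)` for the "house of cards" Markov chain on `ℕ`
starting at `0`, with transition probabilities `p_{i,i+1} = 1 - γ i` and `p_{i,0} = γ i`. -/
noncomputable def hoc (γ : ℕ → ℝ) : ℕ → ℕ → ℝ
  | 0, j => if j = 0 then 1 else 0
  | n + 1, 0 => ∑ i ∈ Finset.range (n + 1), γ i * hoc γ n i
  | n + 1, j + 1 => (1 - γ j) * hoc γ n j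

/-- `ptau γ n` is `P(τ = n)`, the distribution of the first return time to `0`:
`P(τ = n) = γ_{n-1} ∏_{m=0}^{n-2} (1 - γ_m)` for `n ≥ 1`, and `0` for `n = 0`. -/
noncomputable def ptau (γ : ℕ → ℝ) (n : ℕ) : ℝ :=
  if n = 0 then 0 else γ (n - 1) * ∏ m ∈ Finset.range (n - 1), (1 - γ m)

/-- `tailS γ n k = P(S_n ≥ k)` (the chain satisfies `S_n ≤ n`). -/
noncomputable def tailS (γ : ℕ → ℝ) (n k : ℕ) : ℝ :=
  ∑ j ∈ Finset.Icc k n, hoc γ n j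

open Filter Topology

lemma hoc_eq_prod_mul_hoc_zero (γ : ℕ → ℝ) {n j : ℕ} (hj : j ≤ n) :
    hoc γ n j = (∏ m ∈ range j, (1 - γ m)) * hoc γ (n - j) 0 := by
  induction j generalizing n with
  | zero => simp
  | succ j ih =>
    obtain ⟨n, rfl⟩ : ∃ k, n = k + 1 := ⟨n - 1, by omega⟩
    rw [hoc, ih (by omega), prod_range_succ, Nat.add_sub_add_right]
    ring

lemma ptau_succ (γ : ℕ → ℝ) (n : ℕ) :
    ptau γ (n + 1) = γ n * ∏ m ∈ range n, (1 - γ m) := by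
  simp [ptau]

lemma hoc_succ_zero (γ : ℕ → ℝ) (n : ℕ) :
    hoc γ (n + 1) 0 = ∑ i ∈ range (n + 1), ptau γ (i + 1) * hoc γ (n - i) 0 := by
  rw [hoc]
  refine sum_congr rfl fun i hi => ?_
  rw [hoc_eq_prod_mul_hoc_zero γ (Nat.lt_succ_iff.mp (mem_range.mp hi)), ptau_succ, mul_assoc]

lemma sum_range_ptau_succ (γ : ℕ → ℝ) (n : ℕ) :
    ∑ k ∈ range n, ptau γ (k + 1) = 1 - ∏ m ∈ range n, (1 - γ m) := by
  induction n with
  | zero => simp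
  | succ n ih => rw [sum_range_succ, ih, ptau_succ, prod_range_succ]; ring

lemma ptau_succ_nonneg {γ : ℕ → ℝ} (hγ0 : ∀ m, 0 ≤ γ m) (hγ1 : ∀ m, γ m ≤ 1)
    (n : ℕ) : 0 ≤ ptau γ (n + 1) := by
  rw [ptau_succ]
  exact mul_nonneg (hγ0 n) (prod_nonneg fun m _ => sub_nonneg.mpr (hγ1 m))

lemma ptau_succ_le {γ : ℕ → ℝ} (hγ0 : ∀ m, 0 ≤ γ m) (hγ1 : ∀ m, γ m ≤ 1)
    (n : ℕ) : ptau γ (n + 1) ≤ γ n := by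
  rw [ptau_succ]
  exact mul_le_of_le_one_right (hγ0 n)
    (prod_le_one (fun m _ => sub_nonneg.mpr (hγ1 m)) fun m _ => by linarith [hγ0 m])

lemma exp_neg_div_le_one_sub {x y : ℝ} (hx : 0 ≤ x) (hxy : x ≤ y) (hy : y < 1) :
    Real.exp (-(x / (1 - y))) ≤ 1 - x := by
  have hx1 : 0 < 1 - x := by linarith
  have : -(x / (1 - y)) ≤ Real.log (1 - x) :=
    calc -(x / (1 - y)) ≤ -(x / (1 - x)) := by gcongr
      _ = 1 - (1 - x)⁻¹ := by field_simp; ring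
      _ ≤ Real.log (1 - x) := Real.one_sub_inv_le_log_of_pos hx1
  simpa [Real.exp_log hx1] using Real.exp_le_exp.mpr this

lemma exp_neg_sum_div_le_prod_one_sub {x : ℕ → ℝ} (hanti : Antitone x)
    (hx : ∀ m, 0 ≤ x m) (hx0 : x 0 < 1) (n : ℕ) :
    Real.exp (-(∑ m ∈ range n, x m) / (1 - x 0)) ≤ ∏ m ∈ range n, (1 - x m) := by
  rw [neg_div, sum_div, ← sum_neg_distrib, Real.exp_sum]
  exact prod_le_prod (fun _ _ => (Real.exp_pos _).le)
    fun m _ => exp_neg_div_le_one_sub (hx m) (hanti (Nat.zero_le m)) hx0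

lemma exists_pos_le_prod_one_sub {γ : ℕ → ℝ} {C r : ℝ} (hdec : Antitone γ)
    (hγ0 : ∀ m, 0 ≤ γ m) (hγ1 : γ 0 < 1) (hr0 : 0 ≤ r) (hr1 : r < 1)
    (hγexp : ∀ m, γ m ≤ C * r ^ m) :
    ∃ δ > 0, ∀ n, δ ≤ ∏ m ∈ range n, (1 - γ m) := by
  have hC : 0 ≤ C := by simpa using (hγ0 0).trans (hγexp 0)
  have hsum : ∀ n, ∑ m ∈ range n, γ m ≤ C / (1 - r) := fun n =>
    calc ∑ m ∈ range n, γ m ≤ C * ∑ m ∈ Ico 0 n, r ^ m := by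
          rw [← range_eq_Ico, mul_sum]; exact sum_le_sum fun m _ => hγexp m
      _ ≤ C * (r ^ 0 / (1 - r)) := by gcongr; exact geom_sum_Ico_le_of_lt_one hr0 hr1
      _ = C / (1 - r) := by ring
  refine ⟨Real.exp (-(C / (1 - r)) / (1 - γ 0)), Real.exp_pos _, fun n => ?_⟩
  refine le_trans ?_ (exp_neg_sum_div_le_prod_one_sub hdec hγ0 hγ1 n)
  gcongr
  exact hsum n

lemma le_inv_pow_of_renewal {u f : ℕ → ℝ} {t : ℝ} (ht : 0 < t) (hf : ∀ i, 0 ≤ f i)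
    (hu0 : u 0 ≤ 1) (hu : ∀ n, u (n + 1) = ∑ i ∈ range (n + 1), f i * u (n - i))
    (hft : ∀ n, ∑ i ∈ range n, f i * t ^ (i + 1) ≤ 1) (n : ℕ) :
    u n ≤ t⁻¹ ^ n := by
  induction n using Nat.strong_induction_on with
  | _ n ih =>
    match n with
    | 0 => simpa using hu0
    | n + 1 =>
      calc u (n + 1) ≤ ∑ i ∈ range (n + 1), f i * t⁻¹ ^ (n - i) := by
            rw [hu]
            gcongr with i hi
            · exact hf i
            · exact ih _ (by have := mem_range.mp hi; omega)
        _ = (∑ i ∈ range (n + 1), f i * t ^ (i + 1)) * t⁻¹ ^ (n + 1) := by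
            rw [sum_mul]
            refine sum_congr rfl fun i hi => ?_
            have hin : (n - i) + (i + 1) = n + 1 := by have := mem_range.mp hi; omega
            rw [← hin, pow_add t⁻¹, inv_pow t (i + 1)]
            field_simp
        _ ≤ t⁻¹ ^ (n + 1) := mul_le_of_le_one_left (by positivity) (hft _)

lemma exists_one_lt_sum_mul_pow_le_one {f : ℕ → ℝ} {C r q : ℝ} (hf : ∀ i, 0 ≤ f i)
    (hfC : ∀ i, f i ≤ C * r ^ i) (hr0 : 0 ≤ r) (hr1 : r < 1)
    (hq : q < 1) (hsum : ∀ n, ∑ i ∈ range n, f i ≤ q) :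
    ∃ t, 1 < t ∧ ∀ n, ∑ i ∈ range n, f i * t ^ (i + 1) ≤ 1 := by
  -- any `t₀ ∈ (1, 1/r)` works: on `[0, t₀]` the series is dominated by a geometric one
  set t₀ := 2 / (1 + r)
  have ht₀ : 1 < t₀ := by rw [lt_div_iff₀ (by linarith)]; linarith
  have hrt₀ : r * t₀ < 1 := by rw [mul_div_assoc', div_lt_one (by linarith)]; linarith
  have hdom :
      ∀ i, ∀ t ∈ Set.Icc 0 t₀, ‖f i * t ^ (i + 1)‖ ≤ C * t₀ * (r * t₀) ^ i := by
    rintro i t ⟨ht0, htt₀⟩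
    rw [Real.norm_of_nonneg (mul_nonneg (hf i) (by positivity))]
    calc f i * t ^ (i + 1) ≤ C * r ^ i * t₀ ^ (i + 1) :=
          mul_le_mul (hfC i) (pow_le_pow_left₀ ht0 htt₀ _) (by positivity)
            ((hf i).trans (hfC i))
      _ = C * t₀ * (r * t₀) ^ i := by ring
  have hgeom : Summable fun i => C * t₀ * (r * t₀) ^ i :=
    (summable_geometric_of_lt_one (by positivity) hrt₀).mul_left _
  have hG : ContinuousOn (fun t => ∑' i, f i * t ^ (i + 1)) (Set.Icc 0 t₀) :=
    continuousOn_tsum (fun i => by fun_prop) hgeom hdom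
  have hG1 : ∑' i, f i * (1 : ℝ) ^ (i + 1) < 1 := by
    simpa using (Real.tsum_le_of_sum_range_le hf hsum).trans_lt hq
  have hnear : ∀ᶠ t in 𝓝[>] 1, (∑' i, f i * t ^ (i + 1) < 1 ∧ t < t₀) ∧ 1 < t :=
    ((((hG.continuousAt (Icc_mem_nhds one_pos ht₀)).eventually_lt continuousAt_const hG1).and
      (Iio_mem_nhds ht₀)).filter_mono nhdsWithin_le_nhds).and self_mem_nhdsWithin
  obtain ⟨t, ⟨hGt, htt₀⟩, ht1⟩ := hnear.exists
  refine ⟨t, ht1, fun n => le_trans ?_ hGt.le⟩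
  exact (hgeom.of_norm_bounded fun i => hdom i t ⟨by linarith, htt₀.le⟩).sum_le_tsum _
    fun i _ => by have := hf i; positivity

/-- If `γ_m ≤ C r^m` with `0 < r < 1` (and `γ_0 < 1`), then `P(S_n = 0)` decays
exponentially: there are constants `K` and `ζ < 1` with `P(S_n = 0) ≤ K ζ^n`. -/
theorem hoc_exponential_decay (γ : ℕ → ℝ) (C r : ℝ) (hdec : Antitone γ)
    (hγ0 : ∀ m, 0 ≤ γ m) (hγ1 : ∀ m, γ m < 1)
    (hr0 : 0 < r) (hr1 : r < 1) (hγexp : ∀ m, γ m ≤ C * r ^ m) :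
    ∃ K ζ : ℝ, 0 ≤ ζ ∧ ζ < 1 ∧ ∀ n, hoc γ n 0 ≤ K * ζ ^ n := by
  have hγle : ∀ m, γ m ≤ 1 := fun m => (hγ1 m).le
  obtain ⟨δ, hδ, hprod⟩ := exists_pos_le_prod_one_sub hdec hγ0 (hγ1 0) hr0.le hr1 hγexp
  have hreturn : ∀ n, ∑ k ∈ range n, ptau γ (k + 1) ≤ 1 - δ := fun n => by
    rw [sum_range_ptau_succ]; linarith [hprod n]
  obtain ⟨t, ht1, ht⟩ := exists_one_lt_sum_mul_pow_le_one (ptau_succ_nonneg hγ0 hγle)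
    (fun k => (ptau_succ_le hγ0 hγle k).trans (hγexp k)) hr0.le hr1 (by linarith) hreturn
  refine ⟨1, t⁻¹, by positivity, inv_lt_one_of_one_lt₀ ht1, fun n => ?_⟩
  rw [one_mul]
  exact le_inv_pow_of_renewal (u := (hoc γ · 0)) (by linarith) (ptau_succ_nonneg hγ0 hγle)
    (by simp [hoc]) (hoc_succ_zero γ) ht n
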